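/- arXiv:2503.23889 — 2 statements merged into one kernel-verified Lean document; each statement's English description precedes it below -/
import Mathlib

section
/- Let 𝒥' be a finite nonempty set of paths, each path a finite nonempty list of edges, with edge values g : E → [1, ∞). Suppose that for all distinct paths J, J' ∈ 𝒥', max_{e∈J} g(e) ≠ max_{e∈J'} g(e). Then there exists λ₀ > 0 such that for all λ ≥ λ₀, argmin_{J ∈ 𝒥'} Σ_{e∈J} g(e)^λ = argmin_{J ∈ 𝒥'} max_{e∈J} g(e). -/
/-!
Let `J⋆` be the unique path of smallest bottleneck `M`. Every other path `J'` has bottleneck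
`M' > M`, and `∑_{e ∈ J⋆} g(e)^λ ≤ |J⋆| M^λ < M'^λ ≤ ∑_{e ∈ J'} g(e)^λ` as soon as
`|J⋆| (M / M')^λ < 1`, which holds for all large `λ`. Finitely many competitors give a common
threshold, beyond which `J⋆` is also the unique minimiser of the power sums.
-/

open Real

/-- Bottleneck (maximum) edge value along a path. -/
noncomputable def pMax {E : Type*} (g : E → ℝ) (J : List E) : ℝ :=
  (J.map g).foldr max 1

/-- Sum of λ-th powers of the edge values along a path. -/
noncomputable def pPowSum {E : Type*} (g : E → ℝ) (lam : ℝ) (J : List E) : ℝ :=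
  (J.map (fun e => g e ^ lam)).sum

open Filter

section Bottleneck

variable {E : Type*} (g : E → ℝ)

lemma pMax_cons (e : E) (J : List E) : pMax g (e :: J) = max (g e) (pMax g J) := rfl

lemma one_le_pMax (J : List E) : 1 ≤ pMax g J := by
  induction J with
  | nil => exact le_rfl
  | cons e J ih => exact ih.trans (le_max_right _ _)

lemma le_pMax {J : List E} {e : E} (he : e ∈ J) : g e ≤ pMax g J :=
  List.le_max_of_le' 1 (List.mem_map_of_mem he) le_rfl

lemma exists_mem_pMax_eq {J : List E} (hJ : J ≠ []) (hg : ∀ e ∈ J, 1 ≤ g e) :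
    ∃ e ∈ J, g e = pMax g J := by
  induction J with
  | nil => exact absurd rfl hJ
  | cons e J ih =>
    rw [pMax_cons]
    rcases max_choice (g e) (pMax g J) with hmax | hmax
    · exact ⟨e, List.mem_cons_self, hmax.symm⟩
    · rcases eq_or_ne J [] with rfl | hJ'
      · exact ⟨e, List.mem_cons_self, (max_eq_left (hg e List.mem_cons_self)).symm⟩
      · obtain ⟨e', he', hge'⟩ := ih hJ' fun x hx => hg x (List.mem_cons_of_mem _ hx)
        exact ⟨e', List.mem_cons_of_mem _ he', hge'.trans hmax.symm⟩

lemma pMax_rpow_le_pPowSum {J : List E} (hJ : J ≠ []) (hg : ∀ e ∈ J, 1 ≤ g e) (lam : ℝ) :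
    pMax g J ^ lam ≤ pPowSum g lam J := by
  obtain ⟨e, he, hge⟩ := exists_mem_pMax_eq g hJ hg
  rw [← hge]
  refine List.single_le_sum ?_ _ (List.mem_map_of_mem he)
  simp only [List.mem_map]
  rintro _ ⟨e', he', rfl⟩
  exact rpow_nonneg (zero_le_one.trans (hg e' he')) _

lemma pPowSum_le_length_mul_pMax_rpow {J : List E} (hg : ∀ e ∈ J, 0 ≤ g e) {lam : ℝ}
    (hlam : 0 ≤ lam) : pPowSum g lam J ≤ J.length * pMax g J ^ lam := by
  have hle : ∀ x ∈ J.map (fun e => g e ^ lam), x ≤ pMax g J ^ lam := by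
    simp only [List.mem_map]
    rintro _ ⟨e, he, rfl⟩
    exact rpow_le_rpow (hg e he) (le_pMax g he) hlam
  simpa [pPowSum] using List.sum_le_card_nsmul _ _ hle

end Bottleneck

lemma eventually_mul_rpow_lt_rpow {a b : ℝ} (ha : 0 ≤ a) (hab : a < b) (c : ℝ) :
    ∀ᶠ lam : ℝ in atTop, c * a ^ lam < b ^ lam := by
  have hb : 0 < b := ha.trans_lt hab
  have hsmall : ∀ᶠ lam : ℝ in atTop, c * (a / b) ^ lam < 1 := by
    have hlim := (tendsto_rpow_atTop_of_base_lt_one (a / b)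
      (neg_one_lt_zero.trans_le (div_nonneg ha hb.le)) ((div_lt_one hb).2 hab)).const_mul c
    rw [mul_zero] at hlim
    exact hlim.eventually_lt_const zero_lt_one
  filter_upwards [hsmall] with lam hlam
  have hblam : 0 < b ^ lam := rpow_pos_of_pos hb lam
  rw [div_rpow ha hb.le, ← mul_div_assoc, div_lt_one hblam] at hlam
  exact hlam

lemma eventually_pPowSum_lt_of_pMax_lt {E : Type*} {g : E → ℝ} (hg : ∀ e, 1 ≤ g e)
    {J J' : List E} (hJ' : J' ≠ []) (hlt : pMax g J < pMax g J') :
    ∀ᶠ lam : ℝ in atTop, pPowSum g lam J < pPowSum g lam J' := by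
  filter_upwards [eventually_mul_rpow_lt_rpow (zero_le_one.trans (one_le_pMax g J)) hlt J.length,
    eventually_ge_atTop 0] with lam hpow hlam
  calc pPowSum g lam J ≤ J.length * pMax g J ^ lam :=
        pPowSum_le_length_mul_pMax_rpow g (fun e _ => zero_le_one.trans (hg e)) hlam
    _ < pMax g J' ^ lam := hpow
    _ ≤ pPowSum g lam J' := pMax_rpow_le_pPowSum g hJ' (fun e _ => hg e) lam

lemma Finset.filter_forall_le_eq_singleton {α β : Type*} [LinearOrder β] {s : Finset α}
    {f : α → β} {a : α} (ha : a ∈ s) (hlt : ∀ b ∈ s, b ≠ a → f a < f b) :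
    {b ∈ s | ∀ c ∈ s, f b ≤ f c} = {a} := by
  ext b
  simp only [Finset.mem_filter, Finset.mem_singleton]
  constructor
  · rintro ⟨hb, hmin⟩
    by_contra hba
    exact (hlt b hb hba).not_ge (hmin a ha)
  · rintro rfl
    refine ⟨ha, fun c hc => ?_⟩
    rcases eq_or_ne c b with rfl | hcb
    · exact le_rfl
    · exact (hlt c hc hcb).le

theorem stmt_9_general {E : Type*} (g : E → ℝ) (hg : ∀ e : E, 1 ≤ g e)
    (𝒥 : Finset (List E)) (h𝒥ne : 𝒥.Nonempty) (h𝒥 : ∀ J ∈ 𝒥, J ≠ [])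
    (hdist : ∀ J ∈ 𝒥, ∀ J' ∈ 𝒥, J ≠ J' → pMax g J ≠ pMax g J') :
    ∃ lam₀ : ℝ, 0 < lam₀ ∧ ∀ lam : ℝ, lam₀ ≤ lam →
      {J ∈ 𝒥 | ∀ J' ∈ 𝒥, pPowSum g lam J ≤ pPowSum g lam J'} =
        {J ∈ 𝒥 | ∀ J' ∈ 𝒥, pMax g J ≤ pMax g J'} := by
  obtain ⟨Js, hJs, hJs_min⟩ := 𝒥.exists_min_image (pMax g) h𝒥ne
  have hMax_lt : ∀ J ∈ 𝒥, J ≠ Js → pMax g Js < pMax g J := fun J hJ hne =>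
    (hJs_min J hJ).lt_of_ne (hdist Js hJs J hJ hne.symm)
  have hPow_lt : ∀ᶠ lam in atTop, ∀ J ∈ 𝒥, J ≠ Js → pPowSum g lam Js < pPowSum g lam J :=
    (eventually_all_finset 𝒥).2 fun J hJ => by
      rcases eq_or_ne J Js with rfl | hne
      · exact .of_forall fun _ h => absurd rfl h
      · exact (eventually_pPowSum_lt_of_pMax_lt hg (h𝒥 J hJ) (hMax_lt J hJ hne)).mono
          fun _ h _ => h
  obtain ⟨lam₀, hlam₀⟩ := (hPow_lt.and (eventually_gt_atTop 0)).exists_forall_of_atTop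
  refine ⟨lam₀, (hlam₀ lam₀ le_rfl).2, fun lam hlam => ?_⟩
  rw [Finset.filter_forall_le_eq_singleton hJs (hlam₀ lam hlam).1,
    Finset.filter_forall_le_eq_singleton hJs hMax_lt]

theorem stmt_9 {E : Type*} [DecidableEq E] (g : E → ℝ) (hg : ∀ e : E, 1 ≤ g e)
    (𝒥 : Finset (List E)) (h𝒥ne : 𝒥.Nonempty) (h𝒥 : ∀ J ∈ 𝒥, J ≠ [])
    (hdist : ∀ J ∈ 𝒥, ∀ J' ∈ 𝒥, J ≠ J' → pMax g J ≠ pMax g J') :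
    ∃ lam₀ : ℝ, 0 < lam₀ ∧ ∀ lam : ℝ, lam₀ ≤ lam →
      {J ∈ 𝒥 | ∀ J' ∈ 𝒥, pPowSum g lam J ≤ pPowSum g lam J'} =
        {J ∈ 𝒥 | ∀ J' ∈ 𝒥, pMax g J ≤ pMax g J'} :=
  stmt_9_general g hg 𝒥 h𝒥ne h𝒥 hdist
end

section
/- Let G be a finite directed graph, and let J₁ be a path from s to d. For each vertex u on J₁ with u ≠ d, let the root path R(u) be the prefix of J₁ from s to u, and define D(u) as the set of paths from s to d that follow R(u) and then deviate, i.e., whose next edge after u differs from the outgoing edge of u on J₁, and which do not revisit any internal vertex of R(u). Then every path from s to d other than J₁ that is simple belongs to D(u) for exactly one branch vertex u of J₁; that is, the sets D(u) over branch vertices u partition the set of simple s–d paths distinct from J₁. -/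
/-!
Two distinct simple `s`–`d` paths agree up to their first disagreement, and neither is a proper
prefix of the other: a proper prefix of a simple path ending at `d` would contain `d` twice.
So the first disagreement happens at a vertex index `i + 1` on `J₁`, after the common start `s`,
and `P` deviates at `i`. Deviation indices are unique for arbitrary lists, since deviating at `i`
forces a disagreement at `i + 1`, which a deviation at any larger index forbids.
-/

/-- A simple path from `s` to `t` in a directed graph `G`, represented as its
list of vertices (with no repeated vertex). -/
def IsSimplePath {V : Type*} (G : V → V → Prop) (s t : V) (p : List V) : Prop :=
  p ≠ [] ∧ p.head? = some s ∧ p.getLast? = some t ∧ p.Chain' G ∧ p.Nodup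

/-- Path `P` deviates from the path `J₁` exactly at the branch vertex with
index `i` on `J₁`: it shares the root path (prefix of `J₁` up to that vertex)
and its next vertex differs from the next vertex of `J₁`. -/
def DeviatesAt {V : Type*} (J₁ P : List V) (i : ℕ) : Prop :=
  i + 1 < J₁.length ∧ P.take (i + 1) = J₁.take (i + 1) ∧ P[i + 1]? ≠ J₁[i + 1]?

namespace List

variable {α : Type*}

theorem IsPrefix.eq_of_getLast?_eq {l₁ l₂ : List α} (h : l₁ <+: l₂) (hnd : l₂.Nodup)
    (hlast : l₁.getLast? = l₂.getLast?) : l₁ = l₂ := by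
  obtain ⟨t, rfl⟩ := h
  cases ht : t.getLast? with
  | none => simp [getLast?_eq_none_iff.1 ht]
  | some a =>
    rw [getLast?_append, ht, Option.some_or] at hlast
    exact absurd rfl (nodup_append.1 hnd |>.2.2 a (mem_of_getLast? hlast) a (mem_of_getLast? ht))

theorem take_eq_take_of_getElem?_eq {l₁ l₂ : List α} {n : ℕ}
    (h : ∀ m < n, l₁[m]? = l₂[m]?) : l₁.take n = l₂.take n := by
  refine ext_getElem? fun m => ?_
  rcases lt_or_ge m n with hm | hm
  · simp only [getElem?_take_of_lt hm, h m hm]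
  · simp [not_lt.2 hm]

end List

open List

section Deviation

variable {α : Type*} {J P : List α}

theorem DeviatesAt.unique {i j : ℕ} (hi : DeviatesAt J P i) (hj : DeviatesAt J P j) : i = j := by
  wlog hij : i ≤ j generalizing i j
  · exact (this hj hi (by omega)).symm
  by_contra hne
  apply hi.2.2
  simpa [getElem?_take_of_lt (show i + 1 < j + 1 by omega)] using congrArg (·[i + 1]?) hj.2.1

theorem exists_deviatesAt_of_not_isPrefix (hhead : P.head? = J.head?) (hJP : ¬ J <+: P) :
    ∃ i, DeviatesAt J P i := by
  classical
  have hex : ∃ n, n < J.length ∧ P[n]? ≠ J[n]? := by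
    by_contra! h
    exact hJP (prefix_iff_getElem?.2 fun m hm => (h m hm).trans (getElem?_eq_getElem hm))
  obtain ⟨hlt, hdiff⟩ := Nat.find_spec hex
  have hagree : ∀ m < Nat.find hex, P[m]? = J[m]? := fun m hm => by
    by_contra h
    exact Nat.find_min hex hm ⟨hm.trans hlt, h⟩
  obtain ⟨i, hi⟩ : ∃ i, Nat.find hex = i + 1 := Nat.exists_eq_succ_of_ne_zero fun h => by
    rw [h, ← head?_eq_getElem?, ← head?_eq_getElem?] at hdiff
    exact hdiff hhead
  rw [hi] at hlt hdiff hagree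
  exact ⟨i, hlt, take_eq_take_of_getElem?_eq hagree, hdiff⟩

end Deviation

theorem stmt_12_general {V : Type*} (G : V → V → Prop) (s d : V)
    (J₁ : List V) (hJ₁ : IsSimplePath G s d J₁)
    (P : List V) (hP : IsSimplePath G s d P) (hne : P ≠ J₁) :
    ∃! i : ℕ, DeviatesAt J₁ P i := by
  obtain ⟨-, hJhead, hJlast, -, -⟩ := hJ₁
  obtain ⟨-, hPhead, hPlast, -, hPnodup⟩ := hP
  have hJP : ¬ J₁ <+: P := fun h =>
    hne (h.eq_of_getLast?_eq hPnodup (hJlast.trans hPlast.symm)).symm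
  obtain ⟨i, hi⟩ := exists_deviatesAt_of_not_isPrefix (hPhead.trans hJhead.symm) hJP
  exact ⟨i, hi, fun j hj => hj.unique hi⟩

theorem stmt_12 {V : Type*} [DecidableEq V] (G : V → V → Prop) (s d : V)
    (J₁ : List V) (hJ₁ : IsSimplePath G s d J₁)
    (P : List V) (hP : IsSimplePath G s d P) (hne : P ≠ J₁) :
    ∃! i : ℕ, DeviatesAt J₁ P i :=
  stmt_12_general G s d J₁ hJ₁ P hP hne
end
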